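/- If the principal values the agent — E_π[S] ≥ E_π[O] for every finite decision problem O and option O ∈ O, for every selection S of agent-optimal options — then the principal totally trusts the agent: for all X and t with π([E_P(X) ≥ t]) > 0, E_π[X · 1_{[E_P(X)≥t]}] ≥ t · π([E_P(X) ≥ t]). -/

import Mathlib

/-!
Offer the decision problem `{X, t}`. The agent can choose `X` exactly on `A = [E_P(X) ≥ t]` and
the constant `t` elsewhere, so valuing gives `t ≤ E_π[X · 1_A] + t · π(Aᶜ)`; subtracting
`t · π(Aᶜ)` from `t = t · π(A) + t · π(Aᶜ)` leaves total trust.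
-/

open Finset

section

variable {Ω : Type*} [Fintype Ω]

theorem sum_mul_const_of_sum_eq_one {w : Ω → ℝ} (hw : ∑ ω, w ω = 1) (c : ℝ) :
    ∑ ω, w ω * c = c := by
  rw [← sum_mul, hw, one_mul]

theorem sum_mul_ite_sub_mul_sum (π X : Ω → ℝ) (p : Ω → Prop) [DecidablePred p] (t : ℝ) :
    ∑ ω, π ω * (if p ω then X ω else t) - t * ∑ ω, π ω =
      (∑ ω, if p ω then π ω * X ω else 0) - t * ∑ ω, if p ω then π ω else 0 := by
  simp only [mul_sum, ← sum_sub_distrib]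
  refine sum_congr rfl fun ω _ => ?_
  split_ifs <;> ring

theorem threshold_selection_isOptimal (P : Ω → Ω → ℝ) (hP1 : ∀ ω, ∑ ω', P ω ω' = 1)
    (X : Ω → ℝ) (t : ℝ) (ω : Ω) :
    let S : Ω → Ω → ℝ := fun ω ω' => if t ≤ ∑ ω', P ω ω' * X ω' then X ω' else t
    S ω ∈ ({X, fun _ => t} : Finset (Ω → ℝ)) ∧
      ∀ O ∈ ({X, fun _ => t} : Finset (Ω → ℝ)), ∑ ω', P ω ω' * O ω' ≤ ∑ ω', P ω ω' * S ω ω' := by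
  intro S
  have hconst := sum_mul_const_of_sum_eq_one (hP1 ω) t
  by_cases h : t ≤ ∑ ω', P ω ω' * X ω'
  · simp only [S, h, if_true]
    refine ⟨mem_insert_self _ _, ?_⟩
    simp only [mem_insert, mem_singleton, forall_eq_or_imp, forall_eq, le_refl, true_and]
    linarith
  · simp only [S, h, if_false]
    refine ⟨mem_insert_of_mem (mem_singleton_self _), ?_⟩
    simp only [mem_insert, mem_singleton, forall_eq_or_imp, forall_eq, le_refl, and_true]
    linarith

end

theorem stmt_4_general {Ω : Type*} [Fintype Ω]
    (π : Ω → ℝ) (hπ1 : ∑ ω, π ω = 1)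
    (P : Ω → Ω → ℝ) (hP1 : ∀ ω, ∑ ω', P ω ω' = 1)
    -- valuing: for every decision problem and every selection of agent-optimal
    -- options, delegation is weakly preferred to every option
    (hVal : ∀ (D : Finset (Ω → ℝ)), D.Nonempty →
      ∀ S : Ω → Ω → ℝ,
        (∀ ω, S ω ∈ D ∧ ∀ O ∈ D, ∑ ω', P ω ω' * O ω' ≤ ∑ ω', P ω ω' * S ω ω') →
        ∀ O ∈ D, ∑ ω, π ω * O ω ≤ ∑ ω, π ω * S ω ω) :
    ∀ (X : Ω → ℝ) (t : ℝ),
      0 < (∑ ω, if t ≤ ∑ ω', P ω ω' * X ω' then π ω else 0) →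
      t * (∑ ω, if t ≤ ∑ ω', P ω ω' * X ω' then π ω else 0) ≤
        ∑ ω, if t ≤ ∑ ω', P ω ω' * X ω' then π ω * X ω else 0 := by
  intro X t _
  have hval := hVal {X, fun _ => t} (insert_nonempty _ _) _
    (threshold_selection_isOptimal P hP1 X t) (fun _ => t) (by simp)
  rw [sum_mul_const_of_sum_eq_one hπ1] at hval
  have hsplit := sum_mul_ite_sub_mul_sum π X (fun ω => t ≤ ∑ ω', P ω ω' * X ω') t
  rw [hπ1] at hsplit
  linarith

/-- valuing implies total trust (converse direction of Dorst's theorem). -/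
theorem stmt_4 {Ω : Type*} [Fintype Ω]
    (π : Ω → ℝ) (hπ : ∀ ω, 0 ≤ π ω) (hπ1 : ∑ ω, π ω = 1)
    (P : Ω → Ω → ℝ) (hP0 : ∀ ω ω', 0 ≤ P ω ω') (hP1 : ∀ ω, ∑ ω', P ω ω' = 1)
    -- valuing: for every decision problem and every selection of agent-optimal
    -- options, delegation is weakly preferred to every option
    (hVal : ∀ (D : Finset (Ω → ℝ)), D.Nonempty →
      ∀ S : Ω → Ω → ℝ,
        (∀ ω, S ω ∈ D ∧ ∀ O ∈ D, ∑ ω', P ω ω' * O ω' ≤ ∑ ω', P ω ω' * S ω ω') →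
        ∀ O ∈ D, ∑ ω, π ω * O ω ≤ ∑ ω, π ω * S ω ω) :
    ∀ (X : Ω → ℝ) (t : ℝ),
      0 < (∑ ω, if t ≤ ∑ ω', P ω ω' * X ω' then π ω else 0) →
      t * (∑ ω, if t ≤ ∑ ω', P ω ω' * X ω' then π ω else 0) ≤
        ∑ ω, if t ≤ ∑ ω', P ω ω' * X ω' then π ω * X ω else 0 :=
  stmt_4_general π hπ1 P hP1 hVal
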